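/- Let V = { (λ_n) ∈ B_{ℓ²} : (λ_n) is a decreasing sequence of nonnegative reals } and E ⊆ S^ℕ the set of pairwise disjoint sequences from S. Then the map T(( λ_n), (s_n)) = Σ_{n=1}^∞ λ_n s_n*, from V × E (with V carrying the weak topology of ℓ² and E the product topology) to the dual unit ball of JS with the weak-star topology, is continuous. -/

import Mathlib

open Set Filter Topology
open scoped Classical

variable {Γ : Type*}

/-- Sum of a finitely supported function `φ` over a set `s` (i.e. `s*(φ) = Σ_{a∈s} φ(a)`). -/
noncomputable def segSum (s : Set Γ) (φ : Γ →₀ ℝ) : ℝ :=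
  ∑ a ∈ φ.support, if a ∈ s then φ a else 0

/-- The candidate values `(Σ_i (Σ_{a∈s_i} φ(a))²)^{1/2}` over finite pairwise disjoint
families `{s_1,…,s_n} ⊆ S`. -/
noncomputable def jamesSet (S : Set (Set Γ)) (φ : Γ →₀ ℝ) : Set ℝ :=
  { r | ∃ F : Finset (Set Γ), ↑F ⊆ S ∧ (F : Set (Set Γ)).Pairwise Disjoint ∧
      r = Real.sqrt (∑ s ∈ F, (segSum s φ) ^ 2) }

/-- The James-`S` norm on finitely supported functions. -/
noncomputable def jamesNorm (S : Set (Set Γ)) (φ : Γ →₀ ℝ) : ℝ :=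
  sSup (jamesSet S φ)

/-- The characteristic function of a set, viewed in `Γ → ℝ`. -/
noncomputable def indicatorFun (s : Set Γ) : Γ → ℝ := s.indicator fun _ => 1

/-- A family of subsets of `Γ` is countably intersected (Definition 1.1). -/
structure IsCI (S : Set (Set Γ)) : Prop where
  /-- (a) pointwise closed -/
  closed : IsClosed (indicatorFun '' S)
  /-- (a) members countable -/
  countable : ∀ s ∈ S, s.Countable
  /-- (a) contains singletons -/
  singletons : ∀ γ : Γ, {γ} ∈ S
  /-- (b) differences are finite disjoint unions of members -/
  diff : ∀ s ∈ S, ∀ t ∈ S, ∃ F : Finset (Set Γ), ↑F ⊆ S ∧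
    (F : Set (Set Γ)).Pairwise Disjoint ∧ s \ t = ⋃₀ ↑F
  /-- (c) the enveloping condition -/
  env : ∃ st : Set Γ → Set Γ, (∀ t ∈ S, st t ∈ S ∧ t ⊆ st t) ∧
    ∀ s ∈ S, ∀ n : ℕ, ∀ ts : Fin n → Set Γ, (∀ i, ts i ∈ S) →
      ∃ t ∈ S, t ⊆ s \ (⋃ i, st (ts i)) ∧ (s \ ((⋃ i, st (ts i)) ∪ t)).Finite
  /-- (d) each `L_s = {s ∩ t : t ∈ S}` is countable -/
  inter_countable : ∀ s ∈ S, { u : Set Γ | ∃ t ∈ S, u = s ∩ t }.Countable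

/-- Pairing of a "dual vector" `g : Γ → ℝ` with a finitely supported function. -/
noncomputable def dPair (g : Γ → ℝ) (φ : Γ →₀ ℝ) : ℝ := ∑ a ∈ φ.support, φ a * g a

/-- The unit ball of the dual of `JS`, modelled as those `g : Γ → ℝ` whose pairing with every
finitely supported function is dominated by the James-`S` norm; the product topology on
`Γ → ℝ` is the weak-star topology on this ball. -/
def dualBall (S : Set (Set Γ)) : Set (Γ → ℝ) :=
  { g | ∀ φ : Γ →₀ ℝ, |dPair g φ| ≤ jamesNorm S φ }

/-- The dual norm of `g` as a functional on `(Φ, ‖·‖_{J-S})`. -/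
noncomputable def dualNorm (S : Set (Set Γ)) (g : Γ → ℝ) : ℝ :=
  sSup { r | ∃ φ : Γ →₀ ℝ, jamesNorm S φ ≤ 1 ∧ r = |dPair g φ| }

/-- The set `D = {Σ_{i=1}^n λ_i s_i* : s_i ∈ S pairwise disjoint, Σ λ_i² ≤ 1}`. -/
def Dset (S : Set (Set Γ)) : Set (Γ → ℝ) :=
  { g | ∃ (n : ℕ) (l : Fin n → ℝ) (s : Fin n → Set Γ), (∀ i, s i ∈ S) ∧
      Pairwise (Function.onFun Disjoint s) ∧ (∑ i, l i ^ 2) ≤ 1 ∧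
      g = fun γ => ∑ i, if γ ∈ s i then l i else 0 }


/-- `V`: decreasing nonnegative sequences in the unit ball of `ℓ²`, with the coordinatewise
topology (which agrees with the weak topology of `ℓ²` on its unit ball). -/
def Vset : Set (ℕ → ℝ) :=
  { l | (∀ F : Finset ℕ, ∑ n ∈ F, l n ^ 2 ≤ 1) ∧ Antitone l ∧ ∀ n, 0 ≤ l n }

/-- `E`: pairwise disjoint sequences from `S`, as sequences of characteristic functions with
the product topology. -/
def Eset (S : Set (Set Γ)) : Set (ℕ → Γ → ℝ) :=
  { f | ∃ s : ℕ → Set Γ, (∀ n, s n ∈ S) ∧ Pairwise (Function.onFun Disjoint s) ∧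
      ∀ n, f n = indicatorFun (s n) }

/-!
Pairing `Σ λ_n s_n*` with a finitely supported `φ` only sees the finitely many `s_n` meeting the
support of `φ`, so by Cauchy–Schwarz it is bounded by `(Σ_n (s_n*(φ))²)^{1/2} ≤ ‖φ‖_{J-S}`.
For continuity at a coordinate `γ`, disjointness leaves at most one nonzero term
`λ_n · 1_{s_n}(γ)`; for `n ≥ M` it is at most `λ_M ≤ (M+1)^{-1/2}`, because `λ` is decreasing
with `Σ λ_n² ≤ 1`. So the partial sums, which are continuous, converge uniformly on `V × E`.
-/

section

open Finset Function

variable {ι : Type*}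

lemma abs_segSum_le (s : Set Γ) (φ : Γ →₀ ℝ) :
    |segSum s φ| ≤ ∑ a ∈ φ.support.filter (· ∈ s), |φ a| := by
  rw [segSum, ← sum_filter]
  exact abs_sum_le_sum_abs _ _

lemma sum_abs_segSum_le {F : Finset (Set Γ)} (hF : (F : Set (Set Γ)).Pairwise Disjoint)
    (φ : Γ →₀ ℝ) : ∑ s ∈ F, |segSum s φ| ≤ ∑ a ∈ φ.support, |φ a| := by
  have hdisj : (F : Set (Set Γ)).PairwiseDisjoint fun s => φ.support.filter (· ∈ s) :=
    fun s hs t ht hst => disjoint_filter.2 fun _ _ has hat => disjoint_left.1 (hF hs ht hst) has hat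
  calc ∑ s ∈ F, |segSum s φ|
      ≤ ∑ s ∈ F, ∑ a ∈ φ.support.filter (· ∈ s), |φ a| := sum_le_sum fun s _ => abs_segSum_le s φ
    _ = ∑ a ∈ F.biUnion fun s => φ.support.filter (· ∈ s), |φ a| := (sum_biUnion hdisj).symm
    _ ≤ ∑ a ∈ φ.support, |φ a| :=
        sum_le_sum_of_subset_of_nonneg (biUnion_subset.2 fun _ _ => filter_subset _ _)
          fun _ _ _ => abs_nonneg _

lemma jamesSet_bddAbove (S : Set (Set Γ)) (φ : Γ →₀ ℝ) : BddAbove (jamesSet S φ) := by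
  refine ⟨∑ a ∈ φ.support, |φ a|, ?_⟩
  rintro r ⟨F, -, hF, rfl⟩
  refine (Real.sqrt_le_left (sum_nonneg fun _ _ => abs_nonneg _)).2 ?_
  calc ∑ s ∈ F, segSum s φ ^ 2 = ∑ s ∈ F, |segSum s φ| ^ 2 := by simp only [sq_abs]
    _ ≤ (∑ s ∈ F, |segSum s φ|) ^ 2 := sum_sq_le_sq_sum_of_nonneg fun _ _ => abs_nonneg _
    _ ≤ (∑ a ∈ φ.support, |φ a|) ^ 2 :=
        pow_le_pow_left₀ (sum_nonneg fun _ _ => abs_nonneg _) (sum_abs_segSum_le hF φ) 2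

lemma sqrt_sum_sq_segSum_le_jamesNorm {S : Set (Set Γ)} {s : ι → Set Γ} (hsS : ∀ n, s n ∈ S)
    (hs : Pairwise (Disjoint on s)) (φ : Γ →₀ ℝ) (I : Finset ι) :
    √(∑ n ∈ I, segSum (s n) φ ^ 2) ≤ jamesNorm S φ := by
  refine le_csSup (jamesSet_bddAbove S φ) ⟨I.image s, ?_, ?_, ?_⟩
  · simpa [Set.subset_def] using fun n _ => hsS n
  · simp only [coe_image]
    rintro _ ⟨n, -, rfl⟩ _ ⟨m, -, rfl⟩ hnm
    exact hs fun h => hnm (congrArg s h)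
  · rw [sum_image_of_disjoint (by simp [segSum]) fun n _ m _ hnm => hs hnm]

lemma dPair_indicatorFun (s : Set Γ) (φ : Γ →₀ ℝ) : dPair (indicatorFun s) φ = segSum s φ :=
  sum_congr rfl fun a _ => by by_cases h : a ∈ s <;> simp [indicatorFun, h]

lemma dPair_congr {g g' : Γ → ℝ} {φ : Γ →₀ ℝ} (h : ∀ a ∈ φ.support, g a = g' a) :
    dPair g φ = dPair g' φ :=
  sum_congr rfl fun a ha => by rw [h a ha]

lemma dPair_sum (I : Finset ι) (c : ι → ℝ) (g : ι → Γ → ℝ) (φ : Γ →₀ ℝ) :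
    dPair (fun γ => ∑ n ∈ I, c n * g n γ) φ = ∑ n ∈ I, c n * dPair (g n) φ := by
  simp only [dPair, mul_sum]
  rw [sum_comm]
  exact sum_congr rfl fun _ _ => sum_congr rfl fun _ _ => by ring

lemma abs_dPair_tsum_le_jamesNorm {S : Set (Set Γ)} {l : ι → ℝ}
    (hl : ∀ F : Finset ι, ∑ n ∈ F, l n ^ 2 ≤ 1) {s : ι → Set Γ} (hsS : ∀ n, s n ∈ S)
    (hs : Pairwise (Disjoint on s)) (φ : Γ →₀ ℝ) :
    |dPair (fun γ => ∑' n, l n * indicatorFun (s n) γ) φ| ≤ jamesNorm S φ := by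
  obtain ⟨I, hI⟩ : ∃ I : Finset ι, ∀ a ∈ φ.support, ∀ n, a ∈ s n → n ∈ I :=
    ⟨φ.support.biUnion fun a =>
        (subsingleton_setOfPred_mem_iff_pairwise_disjoint.2 hs a).finite.toFinset,
      fun a ha n hn => mem_biUnion.2 ⟨a, ha, by simpa using hn⟩⟩
  have hpair : dPair (fun γ => ∑' n, l n * indicatorFun (s n) γ) φ
      = ∑ n ∈ I, l n * segSum (s n) φ := by
    rw [dPair_congr (g' := fun γ => ∑ n ∈ I, l n * indicatorFun (s n) γ), dPair_sum]
    · simp only [dPair_indicatorFun]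
    · exact fun a ha => tsum_eq_sum fun n hn => by
        rw [indicatorFun, indicator_of_notMem fun h => hn (hI a ha n h), mul_zero]
  rw [hpair]
  refine (Real.abs_le_sqrt ?_).trans (sqrt_sum_sq_segSum_le_jamesNorm hsS hs φ I)
  calc (∑ n ∈ I, l n * segSum (s n) φ) ^ 2
      ≤ (∑ n ∈ I, l n ^ 2) * ∑ n ∈ I, segSum (s n) φ ^ 2 := sum_mul_sq_le_sq_mul_sq _ _ _
    _ ≤ ∑ n ∈ I, segSum (s n) φ ^ 2 :=
        mul_le_of_le_one_left (sum_nonneg fun _ _ => sq_nonneg _) (hl I)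

lemma abs_tsum_sub_sum_range_le {h : ℕ → ℝ} {n₀ M : ℕ} {b : ℝ} (hh : ∀ n ≠ n₀, h n = 0)
    (hb : 0 ≤ b) (hM : ∀ n ≥ M, |h n| ≤ b) : |∑' n, h n - ∑ n ∈ range M, h n| ≤ b := by
  rw [tsum_eq_single n₀ hh]
  by_cases hn₀ : n₀ < M
  · rwa [sum_eq_single_of_mem n₀ (mem_range.2 hn₀) fun n _ hn => hh n hn, sub_self, abs_zero]
  · rw [sum_eq_zero fun n hn => hh n (by rintro rfl; exact hn₀ (mem_range.1 hn)), sub_zero]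
    exact hM n₀ (not_lt.1 hn₀)

lemma le_sqrt_one_div_of_mem_Vset {l : ℕ → ℝ} (hl : l ∈ Vset) (M : ℕ) :
    l M ≤ √(1 / ((M : ℝ) + 1)) := by
  obtain ⟨hsq, hanti, hnonneg⟩ := hl
  rw [Real.le_sqrt (hnonneg M) (by positivity), le_div_iff₀ (by positivity)]
  calc l M ^ 2 * ((M : ℝ) + 1) = ∑ _n ∈ range (M + 1), l M ^ 2 := by simp [mul_comm]
    _ ≤ ∑ n ∈ range (M + 1), l n ^ 2 := sum_le_sum fun n hn =>
        pow_le_pow_left₀ (hnonneg M) (hanti (Nat.lt_succ_iff.1 (mem_range.1 hn))) 2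
    _ ≤ 1 := hsq _

lemma exists_forall_ne_eq_zero_of_mem_Eset {S : Set (Set Γ)} {f : ℕ → Γ → ℝ} (hf : f ∈ Eset S)
    (γ : Γ) : ∃ n₀, ∀ n ≠ n₀, f n γ = 0 := by
  obtain ⟨s, -, hs, hfs⟩ := hf
  by_cases h : ∃ n₀, γ ∈ s n₀
  · obtain ⟨n₀, hn₀⟩ := h
    exact ⟨n₀, fun n hn => by
      rw [hfs, indicatorFun, indicator_of_notMem fun hγ => disjoint_left.1 (hs hn) hγ hn₀]⟩
  · exact ⟨0, fun n _ => by rw [hfs, indicatorFun, indicator_of_notMem (not_exists.1 h n)]⟩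

lemma abs_le_one_of_mem_Eset {S : Set (Set Γ)} {f : ℕ → Γ → ℝ} (hf : f ∈ Eset S) (n : ℕ)
    (γ : Γ) : |f n γ| ≤ 1 := by
  obtain ⟨s, -, -, hfs⟩ := hf
  by_cases h : γ ∈ s n <;> simp [hfs, indicatorFun, h]

lemma tendstoUniformly_sum_range_mul (S : Set (Set Γ)) (γ : Γ) :
    TendstoUniformly
      (fun M (p : Vset × Eset S) => ∑ n ∈ range M, (p.1 : ℕ → ℝ) n * (p.2 : ℕ → Γ → ℝ) n γ)
      (fun p => ∑' n, (p.1 : ℕ → ℝ) n * (p.2 : ℕ → Γ → ℝ) n γ) atTop := by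
  rw [Metric.tendstoUniformly_iff]
  intro ε hε
  have hb : Tendsto (fun M : ℕ => √(1 / ((M : ℝ) + 1))) atTop (𝓝 0) := by
    simpa using (tendsto_one_div_add_atTop_nhds_zero_nat (𝕜 := ℝ)).sqrt
  filter_upwards [hb.eventually (gt_mem_nhds hε)] with M hM
  rintro ⟨⟨l, hl⟩, ⟨f, hf⟩⟩
  have ⟨_, hanti, hnonneg⟩ := hl
  obtain ⟨n₀, hn₀⟩ := exists_forall_ne_eq_zero_of_mem_Eset hf γ
  rw [Real.dist_eq]
  refine (abs_tsum_sub_sum_range_le (h := fun n => l n * f n γ) (n₀ := n₀)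
    (fun n hn => by simp [hn₀ n hn]) (Real.sqrt_nonneg _) fun n hn => ?_).trans_lt hM
  calc |l n * f n γ| = l n * |f n γ| := by rw [abs_mul, abs_of_nonneg (hnonneg n)]
    _ ≤ l n := mul_le_of_le_one_right (hnonneg n) (abs_le_one_of_mem_Eset hf n γ)
    _ ≤ l M := hanti hn
    _ ≤ √(1 / ((M : ℝ) + 1)) := le_sqrt_one_div_of_mem_Vset hl M

lemma continuous_sum_range_mul (S : Set (Set Γ)) (γ : Γ) (M : ℕ) :
    Continuous fun p : Vset × Eset S =>
      ∑ n ∈ range M, (p.1 : ℕ → ℝ) n * (p.2 : ℕ → Γ → ℝ) n γ :=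
  continuous_finsetSum _ fun n _ =>
    ((continuous_apply n).comp (continuous_subtype_val.comp continuous_fst)).mul
      ((continuous_apply_apply n γ).comp (continuous_subtype_val.comp continuous_snd))

end

/-- The map `T((λ_n),(s_n)) = Σ_n λ_n s_n*` maps `V × E` into the dual unit ball of `JS` and
is continuous from `V × E` (weak topology on `V`, product topology on `E`) to the dual ball
with the weak-star topology (modelled as the product topology on `Γ → ℝ`). -/
theorem stmt8 {Γ : Type*} (S : Set (Set Γ)) :
    (∀ p : Vset × Eset S,
      (fun γ => ∑' n, (p.1 : ℕ → ℝ) n * (p.2 : ℕ → Γ → ℝ) n γ) ∈ dualBall S) ∧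
    Continuous (fun p : Vset × Eset S =>
      (fun γ => ∑' n, (p.1 : ℕ → ℝ) n * (p.2 : ℕ → Γ → ℝ) n γ : Γ → ℝ)) := by
  refine ⟨?_, continuous_pi fun γ => ?_⟩
  · rintro ⟨⟨l, hl, -⟩, ⟨f, s, hsS, hs, hfs⟩⟩ φ
    obtain rfl : f = fun n => indicatorFun (s n) := funext hfs
    exact abs_dPair_tsum_le_jamesNorm hl hsS hs φ
  · exact (tendstoUniformly_sum_range_mul S γ).continuous
      (Frequently.of_forall (continuous_sum_range_mul S γ))
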